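/- Fix T > 1, let M = ⌈T·log₂ N⌉, and define r₀ by ∑_{l=1}^{r₀} C(M,l) < N. Then for every λ' with 1/T < λ' < 1 there is N₀ such that for all N ≥ N₀, H(r₀/M) ≤ λ'; in particular r₀/M is bounded above by a constant λ < 1/2 for large N. -/

import Mathlib

/-!
With `M = ⌈T log₂ N⌉` and `p = r₀ / M`, the term `C(M, r₀) p^r₀ (1 - p)^(M - r₀)` is the largest of
the `M + 1` terms of the binomial expansion of `(p + (1 - p))^M = 1`, so
`2^(M H(p)) ≤ (M + 1) C(M, r₀) ≤ (M + 1) N`. As `log₂ N ≤ M / T` and `log₂ (M + 1) = o(M)`, this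
gives `H(p) ≤ λ'` for large `N`. The central coefficient, `2^M ≤ (M + 1) C(M, ⌊M / 2⌋)`, rules out
`r₀ ≥ M / 2` in the same way, and since `H` increases strictly on `[0, 1/2]` to `H(1/2) = 1`, the
bound `H(p) ≤ λ' < 1` keeps `p` away from `1/2`.
-/

noncomputable def binEntropy2 (p : ℝ) : ℝ := -p * Real.logb 2 p - (1 - p) * Real.logb 2 (1 - p)

open Real Filter Finset Asymptotics

lemma binEntropy2_eq_binEntropy_div_log (p : ℝ) : binEntropy2 p = binEntropy p / log 2 := by
  rw [binEntropy2, binEntropy, logb, logb, log_inv, log_inv]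
  ring

lemma continuous_binEntropy2 : Continuous binEntropy2 := by
  simp only [funext binEntropy2_eq_binEntropy_div_log]
  fun_prop

lemma binEntropy2_one_half : binEntropy2 (1 / 2) = 1 := by
  rw [binEntropy2_eq_binEntropy_div_log, one_div, binEntropy_two_inv,
    div_self (log_pos one_lt_two).ne']

lemma binEntropy2_strictMonoOn : StrictMonoOn binEntropy2 (Set.Icc 0 (1 / 2)) := by
  intro x hx y hy hxy
  simp only [binEntropy2_eq_binEntropy_div_log]
  rw [one_div] at hx hy
  gcongr
  exact binEntropy_strictMonoOn hx hy hxy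

lemma exists_lt_half_forall_binEntropy2_le {c : ℝ} (hc : c < 1) :
    ∃ lam : ℝ, lam < 1 / 2 ∧ ∀ p ∈ Set.Icc (0 : ℝ) (1 / 2), binEntropy2 p ≤ c → p ≤ lam := by
  have hnear : ∀ᶠ x in nhdsWithin (1 / 2 : ℝ) (Set.Iio (1 / 2)),
      (c < binEntropy2 x ∧ 0 ≤ x) ∧ x < 1 / 2 :=
    ((continuous_binEntropy2.tendsto (1 / 2)).eventually_const_lt (by rwa [binEntropy2_one_half])
      |>.and (eventually_ge_nhds (by norm_num))).filter_mono nhdsWithin_le_nhds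
      |>.and self_mem_nhdsWithin
  obtain ⟨lam, ⟨hlam, hlam₀⟩, hlam₁⟩ := hnear.exists
  refine ⟨lam, hlam₁, fun p hp hpc ↦ ?_⟩
  exact (binEntropy2_strictMonoOn.le_iff_le hp ⟨hlam₀, hlam₁.le⟩).1 (hpc.trans hlam.le)

section BinomialWeight

variable (M : ℕ) (p : ℝ)

def binomialWeight (k : ℕ) : ℝ := M.choose k * p ^ k * (1 - p) ^ (M - k)

lemma sum_binomialWeight : ∑ k ∈ range (M + 1), binomialWeight M p k = 1 := by
  have h := (add_pow p (1 - p) M).symm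
  rw [add_sub_cancel, one_pow] at h
  rw [← h]
  exact sum_congr rfl fun k _ ↦ by rw [binomialWeight]; ring

variable {M p}

lemma binomialWeight_nonneg (hp₀ : 0 ≤ p) (hp₁ : p ≤ 1) (k : ℕ) : 0 ≤ binomialWeight M p k := by
  have : 0 ≤ 1 - p := by linarith
  unfold binomialWeight
  positivity

lemma binomialWeight_succ_mul {k : ℕ} (hk : k < M) :
    binomialWeight M p (k + 1) * ((k + 1) * (1 - p)) = binomialWeight M p k * ((M - k) * p) := by
  have hchoose : (M.choose (k + 1) : ℝ) * (k + 1) = M.choose k * (M - k) := by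
    have h : ((M.choose (k + 1) * (k + 1) : ℕ) : ℝ) = (M.choose k * (M - k) : ℕ) := by
      rw [Nat.choose_succ_right_eq]
    push_cast [Nat.cast_sub hk.le] at h
    exact h
  have hpow : (1 - p) ^ (M - k) = (1 - p) ^ (M - (k + 1)) * (1 - p) := by
    rw [← pow_succ]; congr 1; omega
  unfold binomialWeight
  rw [hpow, pow_succ]
  linear_combination p ^ k * p * (1 - p) ^ (M - (k + 1)) * (1 - p) * hchoose

lemma binomialWeight_le_binomialWeight_mode {r k : ℕ} (hr : r ≤ M) (hk : k ≤ M) :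
    binomialWeight M (r / M) k ≤ binomialWeight M (r / M) r := by
  rcases Nat.eq_zero_or_pos M with rfl | hM
  · obtain rfl : k = 0 := by omega
    obtain rfl : r = 0 := by omega
    rfl
  set p : ℝ := r / M
  have hMp : M * p = r := mul_div_cancel₀ _ (by positivity)
  have hp₀ : 0 ≤ p := by positivity
  have hp₁ : p ≤ 1 := div_le_one_of_le₀ (by exact_mod_cast hr) (by positivity)
  have hw := binomialWeight_nonneg (M := M) hp₀ hp₁
  -- Consecutive weights have ratio `(M - k) p / ((k + 1) (1 - p))`, which is `≥ 1` iff `k < r`.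
  have hup : MonotoneOn (binomialWeight M p) (Set.Iic r) := by
    refine monotoneOn_of_le_succ Set.ordConnected_Iic fun k _ _ hk₁ ↦ ?_
    simp only [Order.succ_eq_add_one, Set.mem_Iic] at hk₁ ⊢
    have hkr : (k : ℝ) + 1 ≤ r := by exact_mod_cast hk₁
    have hpos : 0 < ((M : ℝ) - k) * p := by
      have : (k : ℝ) < M := by exact_mod_cast (show k < M by omega)
      have : (0 : ℝ) < r := by exact_mod_cast (show 0 < r by omega)
      have : 0 < p := by positivity
      nlinarith
    have := binomialWeight_succ_mul (p := p) (show k < M by omega)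
    nlinarith [hw k, hw (k + 1)]
  have hdown : AntitoneOn (binomialWeight M p) (Set.Icc r M) := by
    refine antitoneOn_of_succ_le Set.ordConnected_Icc fun k _ hk hk₁ ↦ ?_
    simp only [Order.succ_eq_add_one, Set.mem_Icc] at hk hk₁ ⊢
    have hrk : (r : ℝ) ≤ k := by exact_mod_cast hk.1
    have hpos : 0 < ((k : ℝ) + 1) * (1 - p) := by
      have : p < 1 := (div_lt_one (by positivity)).2 (by exact_mod_cast (show r < M by omega))
      nlinarith
    have := binomialWeight_succ_mul (p := p) (show k < M by omega)
    nlinarith [hw k, hw (k + 1)]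
  rcases le_total k r with hkr | hrk
  · exact hup hkr Set.self_mem_Iic hkr
  · exact hdown ⟨le_rfl, hr⟩ ⟨hrk, hk⟩ hrk

lemma one_le_succ_mul_binomialWeight_mode {r : ℕ} (hr : r ≤ M) :
    1 ≤ (M + 1) * binomialWeight M (r / M) r :=
  calc 1 = ∑ k ∈ range (M + 1), binomialWeight M (r / M) k := (sum_binomialWeight M _).symm
    _ ≤ ∑ k ∈ range (M + 1), binomialWeight M (r / M) r :=
      sum_le_sum fun k hk ↦
        binomialWeight_le_binomialWeight_mode hr (Nat.lt_succ_iff.1 (mem_range.1 hk))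
    _ = (M + 1) * binomialWeight M (r / M) r := by simp

end BinomialWeight

lemma mul_binEntropy2_le_logb_succ_mul_choose {M r : ℕ} (hr : r ≤ M) :
    M * binEntropy2 (r / M) ≤ logb 2 ((M + 1) * M.choose r) := by
  set p : ℝ := r / M
  have h := one_le_succ_mul_binomialWeight_mode hr
  rw [binomialWeight, ← mul_assoc, ← mul_assoc] at h
  have hA : ((M : ℝ) + 1) * M.choose r ≠ 0 := by
    have := Nat.choose_pos hr
    positivity
  have hpr : p ^ r ≠ 0 := fun h0 ↦ by rw [h0] at h; norm_num at h
  have hqr : (1 - p) ^ (M - r) ≠ 0 := fun h0 ↦ by rw [h0] at h; norm_num at h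
  have hlog := logb_nonneg one_lt_two h
  rw [logb_mul (mul_ne_zero hA hpr) hqr, logb_mul hA hpr, logb_pow, logb_pow,
    Nat.cast_sub hr] at hlog
  have hMp : M * p = r := by
    rcases Nat.eq_zero_or_pos M with rfl | hM
    · simp [show r = 0 by omega]
    · exact mul_div_cancel₀ _ (by positivity)
  have hH : M * binEntropy2 p = -(r * logb 2 p + (M - r) * logb 2 (1 - p)) := by
    unfold binEntropy2
    linear_combination (logb 2 (1 - p) - logb 2 p) * hMp
  linarith

lemma choose_le_of_sum_Icc_choose_lt {M N r k : ℕ} (hk : k ≤ r)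
    (h : ∑ l ∈ Icc 1 r, M.choose l < N) : M.choose k ≤ N := by
  have hsum : ∑ l ∈ range (r + 1), M.choose l ≤ N := by
    rw [range_eq_Ico, sum_eq_sum_Ico_succ_bot (Nat.add_one_pos r), zero_add,
      Ico_add_one_right_eq_Icc, Nat.choose_zero_right]
    omega
  exact (single_le_sum (fun _ _ ↦ Nat.zero_le _) (mem_range.2 (Nat.lt_succ_of_le hk))).trans hsum

lemma two_pow_le_succ_mul_choose_half (M : ℕ) : 2 ^ M ≤ (M + 1) * M.choose (M / 2) :=
  calc 2 ^ M = ∑ k ∈ range (M + 1), M.choose k := (Nat.sum_range_choose M).symm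
    _ ≤ ∑ _k ∈ range (M + 1), M.choose (M / 2) := sum_le_sum fun k _ ↦ Nat.choose_le_middle k M
    _ = (M + 1) * M.choose (M / 2) := by simp

section SumChooseLt

variable {M N r : ℕ} {lam : ℝ}

lemma two_mul_lt_of_sum_Icc_choose_lt (hM : 0 < M) (hlam : lam < 1)
    (hMN : logb 2 ((M + 1) * N) ≤ lam * M) (h : ∑ l ∈ Icc 1 r, M.choose l < N) : 2 * r < M := by
  by_contra! hr
  have hC := choose_le_of_sum_Icc_choose_lt (k := M / 2) (by omega) h
  have hpow : ((2 ^ M : ℕ) : ℝ) ≤ (M + 1) * N := by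
    exact_mod_cast (two_pow_le_succ_mul_choose_half M).trans (Nat.mul_le_mul_left _ hC)
  have hpos : (0 : ℝ) < (M + 1) * N := lt_of_lt_of_le (by positivity) hpow
  have hlog : (M : ℝ) ≤ logb 2 ((M + 1) * N) := by
    rw [le_logb_iff_rpow_le one_lt_two hpos, rpow_natCast]
    exact_mod_cast hpow
  have : lam * M < M := mul_lt_of_lt_one_left (by exact_mod_cast hM) hlam
  linarith

lemma binEntropy2_le_of_sum_Icc_choose_lt (hM : 0 < M) (hr : r ≤ M)
    (hMN : logb 2 ((M + 1) * N) ≤ lam * M) (h : ∑ l ∈ Icc 1 r, M.choose l < N) :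
    binEntropy2 (r / M) ≤ lam := by
  have hC : (M.choose r : ℝ) ≤ N := by exact_mod_cast choose_le_of_sum_Icc_choose_lt le_rfl h
  have hC₀ := Nat.choose_pos hr
  have hMH : (M : ℝ) * binEntropy2 (r / M) ≤ M * lam :=
    calc (M : ℝ) * binEntropy2 (r / M) ≤ logb 2 ((M + 1) * M.choose r) :=
          mul_binEntropy2_le_logb_succ_mul_choose hr
      _ ≤ logb 2 ((M + 1) * N) := logb_le_logb_of_le one_lt_two (by positivity) (by gcongr)
      _ ≤ M * lam := by linarith
  exact le_of_mul_le_mul_left hMH (by exact_mod_cast hM)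

end SumChooseLt

lemma eventually_logb_add_one_le_mul {ε : ℝ} (hε : 0 < ε) :
    ∀ᶠ x : ℝ in atTop, logb 2 (x + 1) ≤ ε * x := by
  have hshift : (fun x : ℝ ↦ x + 1) =O[atTop] id :=
    IsBigO.of_bound 2 <| by
      filter_upwards [eventually_ge_atTop 1] with x hx
      rw [norm_of_nonneg (by linarith), id, norm_of_nonneg (by linarith)]
      linarith
  have hlog : (fun x : ℝ ↦ (log 2)⁻¹ * log (x + 1)) =o[atTop] id :=
    ((isLittleO_log_id_atTop.comp_tendsto (tendsto_atTop_add_const_right _ 1 tendsto_id))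
      |>.trans_isBigO hshift).const_mul_left _
  filter_upwards [hlog.def hε, eventually_ge_atTop 0] with x hx hx₀
  rw [logb, div_eq_inv_mul]
  simpa [abs_of_nonneg hx₀] using (le_abs_self _).trans hx

lemma tendsto_ceil_mul_logb {T : ℝ} (hT : 0 < T) :
    Tendsto (fun N : ℕ ↦ ⌈T * logb 2 N⌉₊) atTop atTop :=
  tendsto_nat_ceil_atTop.comp
    (((tendsto_logb_atTop one_lt_two).comp tendsto_natCast_atTop_atTop).const_mul_atTop hT)

lemma eventually_logb_succ_mul_le {T lam : ℝ} (hT : 0 < T) (hlam : 1 / T < lam) :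
    ∀ᶠ N : ℕ in atTop, 0 < ⌈T * logb 2 N⌉₊ ∧
      logb 2 ((⌈T * logb 2 N⌉₊ + 1) * N) ≤ lam * ⌈T * logb 2 N⌉₊ := by
  have hM := tendsto_ceil_mul_logb hT
  filter_upwards [hM.eventually_gt_atTop 0, eventually_gt_atTop 0,
    (tendsto_natCast_atTop_atTop.comp hM).eventually
      (eventually_logb_add_one_le_mul (sub_pos.2 hlam))] with N hM₀ hN hM₁
  refine ⟨hM₀, ?_⟩
  set M := ⌈T * logb 2 N⌉₊
  have hlogN : logb 2 N ≤ M / T := by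
    rw [le_div_iff₀ hT, mul_comm]
    exact Nat.le_ceil _
  rw [logb_mul (by positivity) (by positivity)]
  calc logb 2 (M + 1) + logb 2 N ≤ (lam - 1 / T) * M + M / T := add_le_add hM₁ hlogN
    _ = lam * M := by ring

lemma eventually_two_mul_lt_and_binEntropy2_le {T lam : ℝ} (hT : 0 < T) (hlam₀ : 1 / T < lam)
    (hlam₁ : lam < 1) :
    ∀ᶠ N : ℕ in atTop, ∀ r : ℕ, ∑ l ∈ Icc 1 r, (⌈T * logb 2 N⌉₊).choose l < N →
      2 * r < ⌈T * logb 2 N⌉₊ ∧ binEntropy2 (r / ⌈T * logb 2 N⌉₊) ≤ lam := by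
  filter_upwards [eventually_logb_succ_mul_le hT hlam₀] with N ⟨hM, hMN⟩ r h
  have h2r := two_mul_lt_of_sum_Icc_choose_lt hM hlam₁ hMN h
  exact ⟨h2r, binEntropy2_le_of_sum_Icc_choose_lt hM (by omega) hMN h⟩

theorem entropy_ratio_bounded (T : ℝ) (hT : 1 < T) :
    (∀ lam' : ℝ, 1 / T < lam' → lam' < 1 →
      ∃ N₀ : ℕ, ∀ N : ℕ, N₀ ≤ N →
        ∀ r₀ : ℕ,
          (∑ l ∈ Finset.Icc 1 r₀, (⌈T * Real.logb 2 N⌉₊).choose l < N) →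
          binEntropy2 ((r₀ : ℝ) / (⌈T * Real.logb 2 N⌉₊ : ℝ)) ≤ lam') ∧
    (∃ lam : ℝ, lam < 1 / 2 ∧ ∃ N₁ : ℕ, ∀ N : ℕ, N₁ ≤ N →
      ∀ r₀ : ℕ,
        (∑ l ∈ Finset.Icc 1 r₀, (⌈T * Real.logb 2 N⌉₊).choose l < N) →
        (r₀ : ℝ) / (⌈T * Real.logb 2 N⌉₊ : ℝ) ≤ lam) := by
  have hT₀ : 0 < T := zero_lt_one.trans hT
  have hbound {lam : ℝ} (h₀ : 1 / T < lam) (h₁ : lam < 1) :=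
    eventually_atTop.1 (eventually_two_mul_lt_and_binEntropy2_le hT₀ h₀ h₁)
  refine ⟨fun lam' h₀ h₁ ↦ ?_, ?_⟩
  · obtain ⟨N₀, hN₀⟩ := hbound h₀ h₁
    exact ⟨N₀, fun N hN r₀ h ↦ (hN₀ N hN r₀ h).2⟩
  · have hT₁ : 1 / T < 1 := (div_lt_one hT₀).2 hT
    obtain ⟨N₁, hN₁⟩ := hbound (lam := (1 / T + 1) / 2) (by linarith) (by linarith)
    obtain ⟨lam, hlam, hp⟩ :=
      exists_lt_half_forall_binEntropy2_le (c := (1 / T + 1) / 2) (by linarith)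
    refine ⟨lam, hlam, N₁, fun N hN r₀ h ↦ ?_⟩
    obtain ⟨h2r, hH⟩ := hN₁ N hN r₀ h
    have h2r' : 2 * (r₀ : ℝ) < ⌈T * logb 2 N⌉₊ := by exact_mod_cast h2r
    refine hp _ ⟨by positivity, ?_⟩ hH
    rw [div_le_iff₀ (by linarith)]
    linarith
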